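/- Let I be an open interval and γ : I → ℝ³ a smooth curve with ⟨γ(s), γ(s)⟩ = 1 and ⟨γ'(s), γ'(s)⟩ = 1 for all s (a unit-speed curve in the de Sitter sphere S²₁), and set ξ(s) = γ'(s) ×_L γ(s), the unit timelike normal of the spacelike cone x(s,t) = t·γ(s). If there exists U ∈ ℝ³ with ⟨U, U⟩ = −1 such that s ↦ ⟨ξ(s), U⟩ is constant on I, then γ''(s) is spacelike for all s, the curvature √⟨γ''(s), γ''(s)⟩ is a nonzero constant, and there exist a timelike vector w and c ∈ ℝ with ⟨γ(s), w⟩ = c for all s; that is, γ is a circle contained in a spacelike plane. -/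

import Mathlib

/-- The Lorentzian inner product on Minkowski 3-space. -/
def ml (u v : Fin 3 → ℝ) : ℝ := u 0 * v 0 + u 1 * v 1 - u 2 * v 2

/-- The Lorentzian cross product on Minkowski 3-space. -/
def lcross (u v : Fin 3 → ℝ) : Fin 3 → ℝ :=
  ![u 1 * v 2 - u 2 * v 1, u 2 * v 0 - u 0 * v 2, u 1 * v 0 - u 0 * v 1]

lemma mlsymm (u v : Fin 3 → ℝ) : ml u v = ml v u := by simp only [ml]; ring

lemma ml_zero_right (u : Fin 3 → ℝ) : ml u 0 = 0 := by simp [ml]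

lemma lc_right (u v : Fin 3 → ℝ) : ml (lcross u v) v = 0 := by
  simp only [ml, lcross, Matrix.cons_val_zero, Matrix.cons_val_one, Matrix.head_cons,
    Matrix.cons_val_two, Matrix.tail_cons]; ring

lemma lc_lagrange (u v w z : Fin 3 → ℝ) :
    ml (lcross u v) (lcross w z) = -(ml u w * ml v z - ml u z * ml v w) := by
  simp only [ml, lcross, Matrix.cons_val_zero, Matrix.cons_val_one, Matrix.head_cons,
    Matrix.cons_val_two, Matrix.tail_cons]; ring

lemma lc_swap13 (u v w : Fin 3 → ℝ) : ml (lcross u v) w = -(ml (lcross w v) u) := by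
  simp only [ml, lcross, Matrix.cons_val_zero, Matrix.cons_val_one, Matrix.head_cons,
    Matrix.cons_val_two, Matrix.tail_cons]; ring

lemma lcross_self (u : Fin 3 → ℝ) : lcross u u = 0 := by
  funext i; fin_cases i <;> simp [lcross] <;> ring

lemma cramer (x y z : Fin 3 → ℝ) (i : Fin 3) :
    ml (lcross y x) (lcross y x) * z i =
      ml (lcross z x) (lcross y x) * y i + ml (lcross y z) (lcross y x) * x i +
        ml (lcross y x) z * lcross y x i := by
  fin_cases i <;> simp [ml, lcross] <;> ring

section frame
variable {x y : Fin 3 → ℝ}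

lemma frame_xi (h1 : ml x x = 1) (h2 : ml y y = 1) (h3 : ml x y = 0) :
    ml (lcross y x) (lcross y x) = -1 := by
  rw [lc_lagrange, h1, h2, mlsymm y x, h3]; ring

lemma decomp (h1 : ml x x = 1) (h2 : ml y y = 1) (h3 : ml x y = 0) (z : Fin 3 → ℝ) (i : Fin 3) :
    z i = ml z x * x i + ml z y * y i - ml z (lcross y x) * lcross y x i := by
  have hc := cramer x y z i
  rw [frame_xi h1 h2 h3] at hc
  have e2 : ml (lcross z x) (lcross y x) = -(ml z y) := by
    rw [lc_lagrange, h1, h3]; ring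
  have e3 : ml (lcross y z) (lcross y x) = -(ml z x) := by
    rw [lc_lagrange, h2, mlsymm y x, h3, mlsymm z y]; ring
  rw [e2, e3, mlsymm (lcross y x) z] at hc
  linarith

lemma ml_expand (h1 : ml x x = 1) (h2 : ml y y = 1) (h3 : ml x y = 0) (z w : Fin 3 → ℝ) :
    ml z w = ml z x * ml x w + ml z y * ml y w -
      ml z (lcross y x) * ml (lcross y x) w := by
  have e0 := decomp h1 h2 h3 z 0
  have e1 := decomp h1 h2 h3 z 1
  have e2 := decomp h1 h2 h3 z 2
  set p := ml z x with hp
  set q := ml z y with hq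
  set r := ml z (lcross y x) with hr
  simp only [ml, lcross, Matrix.cons_val_zero, Matrix.cons_val_one, Matrix.head_cons,
    Matrix.cons_val_two, Matrix.tail_cons] at e0 e1 e2 ⊢
  rw [e0, e1, e2]; ring
end frame

lemma hasDerivAt_ml {u v : ℝ → Fin 3 → ℝ} {u' v' : Fin 3 → ℝ} {s : ℝ}
    (hu : HasDerivAt u u' s) (hv : HasDerivAt v v' s) :
    HasDerivAt (fun t => ml (u t) (v t)) (ml u' (v s) + ml (u s) v') s := by
  rw [hasDerivAt_pi] at hu hv
  have h := (((hu 0).mul (hv 0)).add ((hu 1).mul (hv 1))).sub ((hu 2).mul (hv 2))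
  simp only [ml]
  exact h.congr_deriv (by ring)

lemma hasDerivAt_lcross {u v : ℝ → Fin 3 → ℝ} {u' v' : Fin 3 → ℝ} {s : ℝ}
    (hu : HasDerivAt u u' s) (hv : HasDerivAt v v' s) :
    HasDerivAt (fun t => lcross (u t) (v t)) (lcross u' (v s) + lcross (u s) v') s := by
  rw [hasDerivAt_pi] at hu hv ⊢
  intro i
  fin_cases i
  · have h := ((hu 1).mul (hv 2)).sub ((hu 2).mul (hv 1))
    simp only [lcross, Pi.add_apply, Matrix.cons_val_zero]
    refine h.congr_deriv ?_
    simp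
    try ring
  · have h := ((hu 2).mul (hv 0)).sub ((hu 0).mul (hv 2))
    simp only [lcross, Pi.add_apply, Matrix.cons_val_one, Matrix.head_cons]
    refine h.congr_deriv ?_
    simp
    try ring
  · have h := ((hu 1).mul (hv 0)).sub ((hu 0).mul (hv 1))
    simp only [lcross, Pi.add_apply, Matrix.cons_val_two, Matrix.tail_cons, Matrix.head_cons]
    refine h.congr_deriv ?_
    simp
    try ring

lemma deriv_zero_of_constOn {F : ℝ → ℝ} {d c e v : ℝ} {s : ℝ} (hs : s ∈ Set.Ioo c e)
    (hF : HasDerivAt F d s) (hc : ∀ t ∈ Set.Ioo c e, F t = v) : d = 0 := by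
  have hev : F =ᶠ[nhds s] fun _ => v :=
    Filter.eventually_of_mem (isOpen_Ioo.mem_nhds hs) hc
  have h2 : HasDerivAt F 0 s := (hasDerivAt_const s v).congr_of_eventuallyEq hev
  exact hF.unique h2

lemma constOn_of_deriv_zero {f : ℝ → ℝ} {c d : ℝ}
    (h : ∀ s ∈ Set.Ioo c d, HasDerivAt f 0 s) :
    ∀ x ∈ Set.Ioo c d, ∀ y ∈ Set.Ioo c d, f x = f y := by
  intro x hx y hy
  refine (convex_Ioo c d).is_const_of_fderivWithin_eq_zero
    (fun z hz => (h z hz).differentiableAt.differentiableWithinAt) (fun z hz => ?_) hx hy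
  have h0 : HasFDerivAt f (ContinuousLinearMap.smulRight (1 : ℝ →L[ℝ] ℝ) 0) z := h z hz
  rw [fderivWithin_of_isOpen isOpen_Ioo hz, h0.fderiv]
  ext
  simp

lemma mlContinuousOn {u v : ℝ → Fin 3 → ℝ} {S : Set ℝ}
    (hu : ContinuousOn u S) (hv : ContinuousOn v S) :
    ContinuousOn (fun t => ml (u t) (v t)) S := by
  have hui : ∀ i, ContinuousOn (fun t => u t i) S :=
    fun i => (continuous_apply i).comp_continuousOn hu
  have hvi : ∀ i, ContinuousOn (fun t => v t i) S :=
    fun i => (continuous_apply i).comp_continuousOn hv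
  simp only [ml]
  exact (((hui 0).mul (hvi 0)).add ((hui 1).mul (hvi 1))).sub ((hui 2).mul (hvi 2))

lemma lcrossContinuousOn {u v : ℝ → Fin 3 → ℝ} {S : Set ℝ}
    (hu : ContinuousOn u S) (hv : ContinuousOn v S) :
    ContinuousOn (fun t => lcross (u t) (v t)) S := by
  have hui : ∀ i, ContinuousOn (fun t => u t i) S :=
    fun i => (continuous_apply i).comp_continuousOn hu
  have hvi : ∀ i, ContinuousOn (fun t => v t i) S :=
    fun i => (continuous_apply i).comp_continuousOn hv
  refine continuousOn_pi.mpr fun i => ?_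
  fin_cases i
  · exact ((hui 1).mul (hvi 2)).sub ((hui 2).mul (hvi 1))
  · exact ((hui 2).mul (hvi 0)).sub ((hui 0).mul (hvi 2))
  · exact ((hui 1).mul (hvi 0)).sub ((hui 0).mul (hvi 1))

/-- If the spacelike cone `x(s,t) = t γ(s)` over a unit-speed curve `γ` in the de Sitter
sphere `S²₁`, with unit normal `ξ(s) = γ'(s) ×_L γ(s)`, is a constant angle surface relative
to a unit timelike vector `U`, then `γ''` is spacelike, the curvature `√⟨γ'', γ''⟩` is a
nonzero constant, and `γ` lies in a spacelike plane (one with timelike Lorentzian normal):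
`γ` is a circle contained in a spacelike plane. -/
theorem constant_angle_cone_generating_circle
    (a b : ℝ) (γ : ℝ → Fin 3 → ℝ)
    (hγ : ContDiffOn ℝ (⊤ : ℕ∞) γ (Set.Ioo a b))
    (hS : ∀ s ∈ Set.Ioo a b, ml (γ s) (γ s) = 1)
    (hunit : ∀ s ∈ Set.Ioo a b, ml (deriv γ s) (deriv γ s) = 1)
    (U : Fin 3 → ℝ) (hU : ml U U = -1)
    (hconst : ∃ C : ℝ, ∀ s ∈ Set.Ioo a b, ml (lcross (deriv γ s) (γ s)) U = C) :
    (∀ s ∈ Set.Ioo a b, 0 < ml (deriv (deriv γ) s) (deriv (deriv γ) s)) ∧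
    (∃ k : ℝ, k ≠ 0 ∧ ∀ s ∈ Set.Ioo a b,
      Real.sqrt (ml (deriv (deriv γ) s) (deriv (deriv γ) s)) = k) ∧
    (∃ (w : Fin 3 → ℝ) (c : ℝ), ml w w < 0 ∧ ∀ s ∈ Set.Ioo a b, ml (γ s) w = c) := by
  obtain ⟨C, hC⟩ := hconst
  have hI : IsOpen (Set.Ioo a b) := isOpen_Ioo
  have hTsm : ContDiffOn ℝ (⊤ : ℕ∞) (deriv γ) (Set.Ioo a b) := hγ.deriv_of_isOpen hI (by simp)
  have hdγ : ∀ s ∈ Set.Ioo a b, HasDerivAt γ (deriv γ s) s := fun s hs =>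
    ((hγ.differentiableOn (by simp)).differentiableAt (hI.mem_nhds hs)).hasDerivAt
  have hdT : ∀ s ∈ Set.Ioo a b, HasDerivAt (deriv γ) (deriv (deriv γ) s) s := fun s hs =>
    ((hTsm.differentiableOn (by simp)).differentiableAt (hI.mem_nhds hs)).hasDerivAt
  -- orthogonality facts
  have key3 : ∀ s ∈ Set.Ioo a b, ml (γ s) (deriv γ s) = 0 := by
    intro s hs
    have h0 := deriv_zero_of_constOn hs (hasDerivAt_ml (hdγ s hs) (hdγ s hs)) hS
    have hsym := mlsymm (deriv γ s) (γ s)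
    linarith
  have key4 : ∀ s ∈ Set.Ioo a b, ml (γ s) (deriv (deriv γ) s) = -1 := by
    intro s hs
    have h0 := deriv_zero_of_constOn hs (hasDerivAt_ml (hdγ s hs) (hdT s hs)) key3
    have h2 := hunit s hs
    have hsym := mlsymm (deriv γ s) (γ s)
    linarith
  have key5 : ∀ s ∈ Set.Ioo a b, ml (deriv γ s) (deriv (deriv γ) s) = 0 := by
    intro s hs
    have h0 := deriv_zero_of_constOn hs (hasDerivAt_ml (hdT s hs) (hdT s hs)) hunit
    have hsym := mlsymm (deriv (deriv γ) s) (deriv γ s)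
    linarith
  have keyxi : ∀ s ∈ Set.Ioo a b, ml (lcross (deriv (deriv γ) s) (γ s)) U = 0 := by
    intro s hs
    have hXi : HasDerivAt (fun t => lcross (deriv γ t) (γ t))
        (lcross (deriv (deriv γ) s) (γ s) + lcross (deriv γ s) (deriv γ s)) s :=
      hasDerivAt_lcross (hdT s hs) (hdγ s hs)
    have hd := hasDerivAt_ml hXi (hasDerivAt_const s U)
    have h0 := deriv_zero_of_constOn hs hd hC
    rw [lcross_self, add_zero, ml_zero_right, add_zero] at h0
    exact h0
  -- κ s := ml (deriv (deriv γ) s) (lcross (deriv γ s) (γ s))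
  have keyA_y : ∀ s ∈ Set.Ioo a b, ml (deriv (deriv γ) s) (deriv γ s) = 0 := by
    intro s hs
    rw [mlsymm]; exact key5 s hs
  have keyA_x : ∀ s ∈ Set.Ioo a b, ml (deriv (deriv γ) s) (γ s) = -1 := by
    intro s hs
    rw [mlsymm]; exact key4 s hs
  have keykg : ∀ s ∈ Set.Ioo a b,
      ml (deriv (deriv γ) s) (lcross (deriv γ s) (γ s)) * ml (deriv γ s) U = 0 := by
    intro s hs
    have hexp := ml_expand (hS s hs) (hunit s hs) (key3 s hs)
      (lcross (deriv (deriv γ) s) (γ s)) U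
    have c1 : ml (lcross (deriv (deriv γ) s) (γ s)) (γ s) = 0 := lc_right _ _
    have c2 : ml (lcross (deriv (deriv γ) s) (γ s)) (deriv γ s) =
        -(ml (deriv (deriv γ) s) (lcross (deriv γ s) (γ s))) := by
      rw [lc_swap13, mlsymm]
    have c3 : ml (lcross (deriv (deriv γ) s) (γ s)) (lcross (deriv γ s) (γ s)) = 0 := by
      rw [lc_lagrange, keyA_y s hs, hS s hs, keyA_x s hs, key3 s hs]
      ring
    rw [c1, c2, c3, keyxi s hs] at hexp
    linarith
  have keyAU : ∀ s ∈ Set.Ioo a b, ml (deriv (deriv γ) s) U =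
      -(ml (γ s) U) - ml (deriv (deriv γ) s) (lcross (deriv γ s) (γ s)) * C := by
    intro s hs
    have hexp := ml_expand (hS s hs) (hunit s hs) (key3 s hs) (deriv (deriv γ) s) U
    rw [keyA_x s hs, keyA_y s hs, hC s hs] at hexp
    linarith
  have keyAA : ∀ s ∈ Set.Ioo a b, ml (deriv (deriv γ) s) (deriv (deriv γ) s) =
      1 - ml (deriv (deriv γ) s) (lcross (deriv γ s) (γ s)) ^ 2 := by
    intro s hs
    have hexp := ml_expand (hS s hs) (hunit s hs) (key3 s hs)
      (deriv (deriv γ) s) (deriv (deriv γ) s)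
    rw [keyA_x s hs, keyA_y s hs, mlsymm (γ s) (deriv (deriv γ) s), keyA_x s hs,
      mlsymm (deriv γ s) (deriv (deriv γ) s), keyA_y s hs,
      mlsymm (lcross (deriv γ s) (γ s)) (deriv (deriv γ) s)] at hexp
    linear_combination hexp
  have keyUU : ∀ s ∈ Set.Ioo a b,
      ml (γ s) U ^ 2 + ml (deriv γ s) U ^ 2 - C ^ 2 = -1 := by
    intro s hs
    have hexp := ml_expand (hS s hs) (hunit s hs) (key3 s hs) U U
    rw [hU, mlsymm U (γ s), mlsymm U (deriv γ s), mlsymm U (lcross (deriv γ s) (γ s)),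
      hC s hs] at hexp
    linear_combination -hexp
  have hf' : ∀ s ∈ Set.Ioo a b, HasDerivAt (fun t => ml (γ t) U) (ml (deriv γ s) U) s := by
    intro s hs
    have h := hasDerivAt_ml (hdγ s hs) (hasDerivAt_const s U)
    rwa [ml_zero_right, add_zero] at h
  have hg' : ∀ s ∈ Set.Ioo a b,
      HasDerivAt (fun t => ml (deriv γ t) U) (ml (deriv (deriv γ) s) U) s := by
    intro s hs
    have h := hasDerivAt_ml (hdT s hs) (hasDerivAt_const s U)
    rwa [ml_zero_right, add_zero] at h
  by_cases hall : ∀ s ∈ Set.Ioo a b, ml (deriv (deriv γ) s) (lcross (deriv γ s) (γ s)) = 0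
  · -- geodesic case: κ ≡ 0
    refine ⟨?_, ⟨1, one_ne_zero, ?_⟩, ?_⟩
    · intro s hs; rw [keyAA s hs, hall s hs]; norm_num
    · intro s hs; rw [keyAA s hs, hall s hs]; norm_num
    · rcases Set.eq_empty_or_nonempty (Set.Ioo a b) with he | ⟨s0, hs0⟩
      · refine ⟨![0, 0, 1], 0, ?_, ?_⟩
        · norm_num [ml]; simp
        · intro s hs; rw [he] at hs; exact absurd hs (Set.notMem_empty s)
      · refine ⟨lcross (deriv γ s0) (γ s0), 0, ?_, ?_⟩
        · rw [frame_xi (hS s0 hs0) (hunit s0 hs0) (key3 s0 hs0)]; norm_num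
        · intro s hs
          have hrule : ∀ t ∈ Set.Ioo a b,
              HasDerivAt (fun r => lcross (deriv γ r) (γ r)) 0 t := by
            intro t ht
            have h := hasDerivAt_lcross (hdT t ht) (hdγ t ht)
            have hz2 : lcross (deriv (deriv γ) t) (γ t) = 0 := by
              funext i
              have hd := decomp (hS t ht) (hunit t ht) (key3 t ht)
                (lcross (deriv (deriv γ) t) (γ t)) i
              have c1 : ml (lcross (deriv (deriv γ) t) (γ t)) (γ t) = 0 := lc_right _ _
              have c2 : ml (lcross (deriv (deriv γ) t) (γ t)) (deriv γ t) = 0 := by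
                rw [lc_swap13, mlsymm, hall t ht]; ring
              have c3 : ml (lcross (deriv (deriv γ) t) (γ t))
                  (lcross (deriv γ t) (γ t)) = 0 := by
                rw [lc_lagrange, keyA_y t ht, hS t ht, keyA_x t ht, key3 t ht]; ring
              rw [hd, c1, c2, c3]; simp
            rw [hz2, lcross_self, add_zero] at h
            exact h
          have hcomp : ∀ i : Fin 3,
              lcross (deriv γ s) (γ s) i = lcross (deriv γ s0) (γ s0) i := by
            intro i
            exact constOn_of_deriv_zero (f := fun r => lcross (deriv γ r) (γ r) i)
              (fun t ht => by
                simpa only [Pi.zero_apply] using (hasDerivAt_pi.mp (hrule t ht) i))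
              s hs s0 hs0
          rw [← funext hcomp, mlsymm]
          exact lc_right _ _
  · -- κ nonzero somewhere
    push_neg at hall
    obtain ⟨s0, hs0, hk0⟩ := hall
    have hCne : C ≠ 0 := by
      intro h0
      have h := keyUU s0 hs0
      rw [h0] at h
      nlinarith [sq_nonneg (ml (γ s0) U), sq_nonneg (ml (deriv γ s0) U)]
    have hAsm : ContDiffOn ℝ (⊤ : ℕ∞) (deriv (deriv γ)) (Set.Ioo a b) :=
      hTsm.deriv_of_isOpen hI (by simp)
    have hκcont : ContinuousOn
        (fun t => ml (deriv (deriv γ) t) (lcross (deriv γ t) (γ t))) (Set.Ioo a b) :=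
      mlContinuousOn hAsm.continuousOn (lcrossContinuousOn hTsm.continuousOn hγ.continuousOn)
    haveI := Subtype.preconnectedSpace (isPreconnected_Ioo (a := a) (b := b))
    set k0 := ml (deriv (deriv γ) s0) (lcross (deriv γ s0) (γ s0)) with hk0def
    set S : Set ↥(Set.Ioo a b) :=
      {p : ↥(Set.Ioo a b) |
        ml (deriv (deriv γ) ↑p) (lcross (deriv γ ↑p) (γ ↑p)) = k0} with hSdef
    have hclosed : IsClosed S := by
      have hc : Continuous fun p : ↥(Set.Ioo a b) =>
          ml (deriv (deriv γ) (↑p : ℝ)) (lcross (deriv γ ↑p) (γ ↑p)) := hκcont.restrict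
      exact isClosed_eq hc continuous_const
    have hopen : IsOpen S := by
      rw [isOpen_iff_mem_nhds]
      intro p hp
      have hp' : ml (deriv (deriv γ) (↑p : ℝ)) (lcross (deriv γ ↑p) (γ ↑p)) = k0 := hp
      rw [nhds_subtype]
      have hccA : ContinuousAt
          (fun t => ml (deriv (deriv γ) t) (lcross (deriv γ t) (γ t))) ↑p :=
        hκcont.continuousAt (hI.mem_nhds p.2)
      have hne : ∀ᶠ t in nhds (↑p : ℝ),
          ml (deriv (deriv γ) t) (lcross (deriv γ t) (γ t)) ≠ 0 :=
        hccA.eventually_ne (by rw [hp']; exact hk0)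
      have hmemI : ∀ᶠ t in nhds (↑p : ℝ), t ∈ Set.Ioo a b :=
        Filter.eventually_of_mem (hI.mem_nhds p.2) (fun t ht => ht)
      have hmem : {t : ℝ | ml (deriv (deriv γ) t) (lcross (deriv γ t) (γ t)) ≠ 0
          ∧ t ∈ Set.Ioo a b} ∈ nhds (↑p : ℝ) := Filter.eventually_iff.mp (hne.and hmemI)
      obtain ⟨c, d, hcd, hsub⟩ := mem_nhds_iff_exists_Ioo_subset.mp hmem
      have hJI : ∀ t ∈ Set.Ioo c d, t ∈ Set.Ioo a b := fun t ht => (hsub ht).2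
      have hJne : ∀ t ∈ Set.Ioo c d,
          ml (deriv (deriv γ) t) (lcross (deriv γ t) (γ t)) ≠ 0 := fun t ht => (hsub ht).1
      have hgz : ∀ t ∈ Set.Ioo c d, ml (deriv γ t) U = 0 := by
        intro t ht
        exact (mul_eq_zero.mp (keykg t (hJI t ht))).resolve_left (hJne t ht)
      have hfc : ∀ u₁ ∈ Set.Ioo c d, ∀ u₂ ∈ Set.Ioo c d, ml (γ u₁) U = ml (γ u₂) U := by
        apply constOn_of_deriv_zero
        intro t ht
        have h := hf' t (hJI t ht)
        rwa [hgz t ht] at h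
      have hκval : ∀ t ∈ Set.Ioo c d,
          ml (deriv (deriv γ) t) (lcross (deriv γ t) (γ t)) = -(ml (γ t) U) / C := by
        intro t ht
        have hAU0 : ml (deriv (deriv γ) t) U = 0 :=
          deriv_zero_of_constOn ht (hg' t (hJI t ht)) hgz
        have h := keyAU t (hJI t ht)
        rw [hAU0] at h
        field_simp
        linarith
      refine Filter.mem_comap.mpr ⟨Set.Ioo c d, Ioo_mem_nhds hcd.1 hcd.2, ?_⟩
      intro q hq
      show ml (deriv (deriv γ) (↑q : ℝ)) (lcross (deriv γ ↑q) (γ ↑q)) = k0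
      rw [hκval ↑q hq, ← hp', hκval ↑p hcd, hfc ↑q hq ↑p hcd]
    have hSne : S.Nonempty := by
      refine ⟨⟨s0, hs0⟩, ?_⟩
      show ml (deriv (deriv γ) s0) (lcross (deriv γ s0) (γ s0)) = k0
      rw [hk0def]
    have hSuniv : S = Set.univ := IsClopen.eq_univ ⟨hclosed, hopen⟩ hSne
    have hκconst : ∀ s ∈ Set.Ioo a b,
        ml (deriv (deriv γ) s) (lcross (deriv γ s) (γ s)) = k0 := by
      intro s hs
      have hm : (⟨s, hs⟩ : ↥(Set.Ioo a b)) ∈ S := hSuniv ▸ Set.mem_univ _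
      exact hm
    have hgz : ∀ s ∈ Set.Ioo a b, ml (deriv γ s) U = 0 := by
      intro s hs
      have h := keykg s hs
      rw [hκconst s hs] at h
      exact (mul_eq_zero.mp h).resolve_left hk0
    have hfval : ∀ s ∈ Set.Ioo a b, ml (γ s) U = -(k0 * C) := by
      intro s hs
      have hAU0 : ml (deriv (deriv γ) s) U = 0 :=
        deriv_zero_of_constOn hs (hg' s hs) hgz
      have h := keyAU s hs
      rw [hAU0, hκconst s hs] at h
      linarith
    have hpos : 0 < 1 - k0 ^ 2 := by
      have h := keyUU s0 hs0
      rw [hfval s0 hs0, hgz s0 hs0] at h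
      have hC2 : 0 < C ^ 2 := by positivity
      nlinarith [h, hC2]
    refine ⟨?_, ⟨Real.sqrt (1 - k0 ^ 2), (Real.sqrt_pos.mpr hpos).ne', ?_⟩,
      U, -(k0 * C), by rw [hU]; norm_num, hfval⟩
    · intro s hs; rw [keyAA s hs, hκconst s hs]; exact hpos
    · intro s hs; rw [keyAA s hs, hκconst s hs]
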